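/- arXiv:1907.04757 — 5 statements merged into one kernel-verified Lean document; each statement's English description precedes it below -/
import Mathlib

section
/- Let α ∈ (0, π/2). There exist constants C > 0 and a₀ > 0 (depending only on α) such that for every u ∈ ℂ and every g ∈ ℂ with |g| = 1, if W(u,g) < a₀², then: (i) | |u|² − 1 | ≤ √(2·W(u,g)); and (ii) writing φ for the principal argument of u·conj(g) (so φ ∈ (−π, π]), either |φ − α| ≤ C·√(W(u,g)) or |φ + α| ≤ C·√(W(u,g)). -/
/-! The modulus part of `W` controls `||u|² − 1|`, and `Re z = |z| cos (arg z)` turns the anchoring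
part into a bound `|cos φ − cos α| ≤ (1 + √2)√W` for `φ = arg (u·conj g)`, valid for every `u`.
Since `cos x − cos α = −2 sin ((x+α)/2) sin ((x−α)/2)`, concavity of `sin` on `[0, π]` and
Jordan's inequality make `cos` uniformly reverse-Lipschitz at `α` on all of `[0, π]`; applied to
`x = |φ|` this bounds `||φ| − α|` by a multiple of `√W`. -/

/-- The boundary anchoring energy density
`W(u,g) = (1/2)(|u|² − 1)² + (Re(u·conj g) − cos α)²`. -/
noncomputable def Wdens (α : ℝ) (u g : ℂ) : ℝ :=
  (1 / 2) * (‖u‖ ^ 2 - 1) ^ 2 +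
    ((u * (starRingEnd ℂ) g).re - Real.cos α) ^ 2

open Real

lemma Real.min_sin_le_sin_of_mem_Icc {a b y : ℝ} (ha : 0 ≤ a) (hb : b ≤ π) (hy : y ∈ Set.Icc a b) :
    min (sin a) (sin b) ≤ sin y :=
  strictConcaveOn_sin_Icc.concaveOn.min_le_of_mem_Icc ⟨ha, hy.1.trans (hy.2.trans hb)⟩
    ⟨ha.trans (hy.1.trans hy.2), hb⟩ hy

lemma Real.mul_abs_sub_le_abs_cos_sub_cos {x α : ℝ} (hx : x ∈ Set.Icc 0 π)
    (hα : α ∈ Set.Icc 0 π) :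
    min (sin (α / 2)) (cos (α / 2)) * |x - α| ≤ π / 2 * |cos x - cos α| := by
  obtain ⟨hx0, hxπ⟩ := hx
  obtain ⟨hα0, hαπ⟩ := hα
  have hsum : min (sin (α / 2)) (cos (α / 2)) ≤ sin ((x + α) / 2) := by
    rw [← sin_add_pi_div_two]
    exact min_sin_le_sin_of_mem_Icc (by linarith) (by linarith) ⟨by linarith, by linarith⟩
  have hdiff : 2 / π * |(x - α) / 2| ≤ |sin ((x - α) / 2)| :=
    mul_abs_le_abs_sin (by rw [abs_le]; constructor <;> linarith)
  have hsum0 : 0 ≤ sin ((x + α) / 2) := sin_nonneg_of_nonneg_of_le_pi (by linarith) (by linarith)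
  calc min (sin (α / 2)) (cos (α / 2)) * |x - α|
      = π / 2 * (2 * min (sin (α / 2)) (cos (α / 2)) * (2 / π * |(x - α) / 2|)) := by
        rw [abs_div, abs_two]; field_simp
    _ ≤ π / 2 * (2 * sin ((x + α) / 2) * |sin ((x - α) / 2)|) := by gcongr
    _ = π / 2 * |cos x - cos α| := by
        rw [cos_sub_cos, abs_mul, abs_mul, abs_of_nonneg hsum0]; norm_num

lemma abs_sub_one_le_abs_sq_sub_one {r : ℝ} (hr : 0 ≤ r) : |r - 1| ≤ |r ^ 2 - 1| := by
  rw [show r ^ 2 - 1 = (r - 1) * (r + 1) by ring, abs_mul, abs_of_pos (by linarith : 0 < r + 1)]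
  exact le_mul_of_one_le_right (abs_nonneg _) (by linarith)

lemma Complex.abs_cos_arg_sub_le (z : ℂ) (c : ℝ) :
    |Real.cos z.arg - c| ≤ |‖z‖ - 1| + |z.re - c| := by
  calc |Real.cos z.arg - c| = |(z.re - c) - Real.cos z.arg * (‖z‖ - 1)| := by
        rw [← Complex.norm_mul_cos_arg]; ring_nf
    _ ≤ |Real.cos z.arg| * |‖z‖ - 1| + |z.re - c| := by
        rw [← abs_mul, add_comm]; exact abs_sub _ _
    _ ≤ |‖z‖ - 1| + |z.re - c| := by
        gcongr; exact mul_le_of_le_one_left (abs_nonneg _) (abs_cos_le_one _)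

section Wdens

variable (α : ℝ) (u g : ℂ)

lemma abs_norm_sq_sub_one_le_sqrt_Wdens : |‖u‖ ^ 2 - 1| ≤ √(2 * Wdens α u g) := by
  rw [← sqrt_sq_eq_abs]
  exact sqrt_le_sqrt (by unfold Wdens; nlinarith [sq_nonneg ((u * (starRingEnd ℂ) g).re - cos α)])

lemma abs_re_sub_cos_le_sqrt_Wdens : |(u * (starRingEnd ℂ) g).re - cos α| ≤ √(Wdens α u g) := by
  rw [← sqrt_sq_eq_abs]
  exact sqrt_le_sqrt (by unfold Wdens; nlinarith [sq_nonneg (‖u‖ ^ 2 - 1)])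

lemma abs_cos_arg_sub_cos_le_sqrt_Wdens (hg : ‖g‖ = 1) :
    |cos (u * (starRingEnd ℂ) g).arg - cos α| ≤ (1 + √2) * √(Wdens α u g) := by
  have hnorm : ‖u * (starRingEnd ℂ) g‖ = ‖u‖ := by simp [hg]
  have hmod : |‖u‖ - 1| ≤ √2 * √(Wdens α u g) := by
    rw [← sqrt_mul zero_le_two]
    exact (abs_sub_one_le_abs_sq_sub_one (norm_nonneg u)).trans
      (abs_norm_sq_sub_one_le_sqrt_Wdens α u g)
  have := Complex.abs_cos_arg_sub_le (u * (starRingEnd ℂ) g) (cos α)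
  rw [hnorm] at this
  linarith [abs_re_sub_cos_le_sqrt_Wdens α u g]

end Wdens

/-- For `α ∈ (0, π/2)` there exist `C > 0` and `a₀ > 0` such that whenever `|g| = 1`
and `W(u,g) < a₀²`, the modulus satisfies `||u|² − 1| ≤ √(2·W(u,g))` and the principal
argument `φ` of `u·conj g` satisfies `|φ − α| ≤ C·√W` or `|φ + α| ≤ C·√W`. -/
theorem W_coercive (α : ℝ) (hα : α ∈ Set.Ioo 0 (Real.pi / 2)) :
    ∃ C > (0 : ℝ), ∃ a₀ > (0 : ℝ), ∀ u g : ℂ, ‖g‖ = 1 →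
      Wdens α u g < a₀ ^ 2 →
        |‖u‖ ^ 2 - 1| ≤ Real.sqrt (2 * Wdens α u g) ∧
        (|Complex.arg (u * (starRingEnd ℂ) g) - α| ≤ C * Real.sqrt (Wdens α u g) ∨
         |Complex.arg (u * (starRingEnd ℂ) g) + α| ≤ C * Real.sqrt (Wdens α u g)) := by
  obtain ⟨hα0, hαπ⟩ := hα
  set m := min (sin (α / 2)) (cos (α / 2))
  have hm : 0 < m := lt_min (sin_pos_of_pos_of_lt_pi (by linarith) (by linarith))
    (cos_pos_of_mem_Ioo ⟨by linarith [pi_pos], by linarith⟩)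
  refine ⟨π / 2 * (1 + √2) / m, by positivity, 1, one_pos, fun u g hg _ => ⟨?_, ?_⟩⟩
  · exact abs_norm_sq_sub_one_le_sqrt_Wdens α u g
  set φ := (u * (starRingEnd ℂ) g).arg
  have hφ : m * |(|φ|) - α| ≤ π / 2 * ((1 + √2) * √(Wdens α u g)) := by
    refine (mul_abs_sub_le_abs_cos_sub_cos ⟨abs_nonneg φ, Complex.abs_arg_le_pi _⟩
      ⟨hα0.le, by linarith⟩).trans ?_
    rw [cos_abs]
    gcongr
    exact abs_cos_arg_sub_cos_le_sqrt_Wdens α u g hg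
  rw [mul_comm, ← le_div_iff₀ hm, ← mul_assoc, mul_div_right_comm] at hφ
  rcases le_total 0 φ with h | h
  · exact Or.inl (by rwa [abs_of_nonneg h] at hφ)
  · exact Or.inr (by rwa [abs_of_nonpos h, ← abs_neg, neg_sub, sub_neg_eq_add, add_comm] at hφ)
end

section
/- Let a be a real number with 0 < a < 1/2, and let m, n be integers. Then (m + a)² + (n − a)² ≥ (m + n − 1) + a² + (1 − a)², with equality if and only if m = 0 and n = 1. -/
/-!
Writing `c = 1 - 2a`, the difference of the two sides is `q m + q (1 - n)` with
`q k = k (k - c)`. Since `|c| < 1`, for an integer `k ≠ 0` both factors of `q k` have the sign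
of `k`, so `q k > 0`; hence the difference is nonnegative and vanishes only at `m = 0`, `n = 1`.
-/

section IntMulSub

variable {k : ℤ} {c : ℝ}

theorem int_mul_sub_pos (hc : |c| < 1) (hk : k ≠ 0) : 0 < (k : ℝ) * (k - c) := by
  obtain ⟨hc₁, hc₂⟩ := abs_lt.1 hc
  rcases lt_or_gt_of_ne hk with hneg | hpos
  · have hk' : (k : ℝ) ≤ -1 := by exact_mod_cast Int.le_sub_one_of_lt hneg
    exact mul_pos_of_neg_of_neg (by linarith) (by linarith)
  · have hk' : (1 : ℝ) ≤ k := by exact_mod_cast hpos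
    exact mul_pos (by linarith) (by linarith)

theorem int_mul_sub_nonneg (hc : |c| < 1) : 0 ≤ (k : ℝ) * (k - c) := by
  rcases eq_or_ne k 0 with rfl | hk
  · simp
  · exact (int_mul_sub_pos hc hk).le

theorem int_mul_sub_eq_zero_iff (hc : |c| < 1) : (k : ℝ) * (k - c) = 0 ↔ k = 0 := by
  refine ⟨fun h => ?_, fun h => by simp [h]⟩
  by_contra hk
  exact (int_mul_sub_pos hc hk).ne' h

end IntMulSub

/-- For `0 < a < 1/2` and integers `m, n`,
`(m + a)² + (n − a)² ≥ (m + n − 1) + a² + (1 − a)²`,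
with equality iff `m = 0` and `n = 1`. -/
theorem pair_inequality (a : ℝ) (ha : 0 < a) (ha' : a < 1 / 2) (m n : ℤ) :
    ((m : ℝ) + a) ^ 2 + ((n : ℝ) - a) ^ 2 ≥
      ((m : ℝ) + (n : ℝ) - 1) + a ^ 2 + (1 - a) ^ 2 ∧
    (((m : ℝ) + a) ^ 2 + ((n : ℝ) - a) ^ 2 =
      ((m : ℝ) + (n : ℝ) - 1) + a ^ 2 + (1 - a) ^ 2 ↔ m = 0 ∧ n = 1) := by
  have hc : |1 - 2 * a| < 1 := abs_lt.2 ⟨by linarith, by linarith⟩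
  have key : ((m : ℝ) + a) ^ 2 + ((n : ℝ) - a) ^ 2 -
      (((m : ℝ) + (n : ℝ) - 1) + a ^ 2 + (1 - a) ^ 2) =
      (m : ℝ) * (m - (1 - 2 * a)) + ((1 - n : ℤ) : ℝ) * ((1 - n : ℤ) - (1 - 2 * a)) := by
    push_cast
    ring
  have hm := int_mul_sub_nonneg (k := m) hc
  have hn := int_mul_sub_nonneg (k := 1 - n) hc
  refine ⟨sub_nonneg.1 (key ▸ add_nonneg hm hn), ?_⟩
  rw [← sub_eq_zero, key, add_eq_zero_iff_of_nonneg hm hn, int_mul_sub_eq_zero_iff hc,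
    int_mul_sub_eq_zero_iff hc]
  omega
end

section
/- Let α ∈ (0, π/2) and set C_α := (α/π)² + (1 − α/π)². Let N^v, N^b be natural numbers, let n⁰ : {1, …, N^v} → ℤ and n⁻, n⁺ : {1, …, N^b} → ℤ be families of integers, and let D := Σ_{j=1}^{N^v} n⁰_j + Σ_{i=1}^{N^b} (n⁻_i + n⁺_i). Then Σ_{j=1}^{N^v} (n⁰_j)² + Σ_{i=1}^{N^b} [ (n⁻_i + α/π)² + (n⁺_i − α/π)² ] ≥ |D| · C_α. -/
/-! With `β = α/π ∈ [0, 1]` and `C = β² + (1 - β)² ≤ 1`, the triangle inequality reduces the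
claim to one vortex or one pair of boojums at a time. A vortex costs `n² ≥ |n| ≥ |n| C`.
A pair costs `(n + β)² + (m - β)² = ((n + m)² + (n - m + 2β)²) / 2`, while
`C = (1 + (1 - 2β)²) / 2`: if `|n + m| ≥ 2` the first square alone suffices, and if
`|n + m| = 1` then `n - m` is odd, so `|n - m + 2β| ≥ |1 - 2β|`. -/

open Finset

lemma abs_sum_mul_le_sum {ι : Type*} (s : Finset ι) {f g : ι → ℝ} {c : ℝ} (hc : 0 ≤ c)
    (hfg : ∀ i ∈ s, |f i| * c ≤ g i) : |∑ i ∈ s, f i| * c ≤ ∑ i ∈ s, g i :=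
  calc |∑ i ∈ s, f i| * c ≤ (∑ i ∈ s, |f i|) * c := by
        gcongr; exact abs_sum_le_sum_abs _ _
    _ = ∑ i ∈ s, |f i| * c := sum_mul _ _ _
    _ ≤ ∑ i ∈ s, g i := sum_le_sum hfg

lemma abs_intCast_le_sq (n : ℤ) : |(n : ℝ)| ≤ (n : ℝ) ^ 2 := by
  exact_mod_cast (Int.natCast_natAbs n ▸ Int.natAbs_le_self_sq n)

lemma sq_add_one_sub_sq_le_one {β : ℝ} (hβ0 : 0 ≤ β) (hβ1 : β ≤ 1) :
    β ^ 2 + (1 - β) ^ 2 ≤ 1 := by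
  nlinarith

lemma abs_intCast_mul_le_sq {β : ℝ} (hβ0 : 0 ≤ β) (hβ1 : β ≤ 1) (n : ℤ) :
    |(n : ℝ)| * (β ^ 2 + (1 - β) ^ 2) ≤ (n : ℝ) ^ 2 :=
  calc |(n : ℝ)| * (β ^ 2 + (1 - β) ^ 2) ≤ |(n : ℝ)| * 1 := by
        gcongr; exact sq_add_one_sub_sq_le_one hβ0 hβ1
    _ ≤ (n : ℝ) ^ 2 := by rw [mul_one]; exact abs_intCast_le_sq n

-- `(j + 2β)² - (1 - 2β)² = (j + 1)(j - 1 + 4β)`, and for odd `j` the two factors never have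
-- opposite strict signs.
lemma one_sub_two_mul_sq_le_of_odd {β : ℝ} (hβ0 : 0 ≤ β) (hβ1 : β ≤ 1) {j : ℤ}
    (hj : Odd j) :
    (1 - 2 * β) ^ 2 ≤ ((j : ℝ) + 2 * β) ^ 2 := by
  obtain ⟨k, rfl⟩ := hj
  push_cast
  obtain hk | rfl | hk : 0 ≤ k ∨ k = -1 ∨ k ≤ -2 := by omega
  · have hk' : (0 : ℝ) ≤ k := by exact_mod_cast hk
    nlinarith
  · exact le_of_eq (by push_cast; ring)
  · have hk' : (k : ℝ) ≤ -2 := by exact_mod_cast hk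
    nlinarith

lemma abs_add_mul_le_sq_add_sq_sub {β : ℝ} (hβ0 : 0 ≤ β) (hβ1 : β ≤ 1) (n m : ℤ) :
    |(n : ℝ) + m| * (β ^ 2 + (1 - β) ^ 2) ≤ ((n : ℝ) + β) ^ 2 + ((m : ℝ) - β) ^ 2 := by
  have hsplit : ((n : ℝ) + β) ^ 2 + ((m : ℝ) - β) ^ 2
      = (((n : ℝ) + m) ^ 2 + (((n - m : ℤ) : ℝ) + 2 * β) ^ 2) / 2 := by push_cast; ring
  have hC : β ^ 2 + (1 - β) ^ 2 = (1 + (1 - 2 * β) ^ 2) / 2 := by ring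
  rw [hsplit]
  obtain h | h | h : |n + m| = 0 ∨ |n + m| = 1 ∨ 2 ≤ |n + m| := by
    have := abs_nonneg (n + m); omega
  · have : (n : ℝ) + m = 0 := by exact_mod_cast abs_eq_zero.mp h
    rw [this, abs_zero, zero_mul]; positivity
  · have habs : |(n : ℝ) + m| = 1 := by exact_mod_cast h
    have hodd : Odd (n - m) := by
      rcases abs_eq (zero_le_one' ℤ) |>.mp h with hsum | hsum
      · exact ⟨n - 1, by omega⟩
      · exact ⟨n, by omega⟩
    have hsq : ((n : ℝ) + m) ^ 2 = 1 := by rw [← sq_abs, habs, one_pow]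
    rw [habs, one_mul, hC, hsq]
    linarith [one_sub_two_mul_sq_le_of_odd hβ0 hβ1 hodd]
  · have habs : 2 ≤ |(n : ℝ) + m| := by exact_mod_cast h
    calc |(n : ℝ) + m| * (β ^ 2 + (1 - β) ^ 2) ≤ |(n : ℝ) + m| * 1 := by
          gcongr; exact sq_add_one_sub_sq_le_one hβ0 hβ1
      _ ≤ ((n : ℝ) + m) ^ 2 / 2 := by rw [← sq_abs]; nlinarith
      _ ≤ _ := by gcongr; nlinarith

open Finset in
/-- The degree lemma (lower bound): for `α ∈ (0, π/2)`, boundary-vortex degrees `n⁰`,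
light/heavy boojum degrees `n⁻, n⁺`, and total degree `D`,
`Σ (n⁰)² + Σ [(n⁻ + α/π)² + (n⁺ − α/π)²] ≥ |D|·C_α`. -/
theorem degree_lemma_lower_bound (α : ℝ) (hα : α ∈ Set.Ioo 0 (Real.pi / 2))
    (Nv Nb : ℕ) (n0 : Fin Nv → ℤ) (nm np : Fin Nb → ℤ) (D : ℤ)
    (hD : D = (∑ j, n0 j) + ∑ i, (nm i + np i)) :
    (∑ j, ((n0 j : ℝ)) ^ 2) +
      ∑ i, (((nm i : ℝ) + α / Real.pi) ^ 2 + ((np i : ℝ) - α / Real.pi) ^ 2) ≥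
      |(D : ℝ)| * ((α / Real.pi) ^ 2 + (1 - α / Real.pi) ^ 2) := by
  have hβ0 : 0 ≤ α / Real.pi := div_nonneg hα.1.le Real.pi_pos.le
  have hβ1 : α / Real.pi ≤ 1 := by
    rw [div_le_one Real.pi_pos]; linarith [hα.2, Real.pi_pos]
  have hD' : (D : ℝ) = (∑ j, (n0 j : ℝ)) + ∑ i, ((nm i : ℝ) + np i) := by
    rw [hD]; push_cast; rfl
  rw [ge_iff_le, hD']
  calc _ ≤ (|∑ j, (n0 j : ℝ)| + |∑ i, ((nm i : ℝ) + np i)|) *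
        ((α / Real.pi) ^ 2 + (1 - α / Real.pi) ^ 2) := by gcongr; exact abs_add_le _ _
    _ ≤ _ := by
      rw [add_mul]
      gcongr
      · exact abs_sum_mul_le_sum _ (by positivity) fun j _ ↦ abs_intCast_mul_le_sq hβ0 hβ1 _
      · exact abs_sum_mul_le_sum _ (by positivity) fun i _ ↦
          abs_add_mul_le_sq_add_sq_sub hβ0 hβ1 _ _
end

section
/- Let α ∈ (0, π/2) and set C_α := (α/π)² + (1 − α/π)². Let N^v, N^b be natural numbers, let n⁰ : {1, …, N^v} → ℤ and n⁻, n⁺ : {1, …, N^b} → ℤ be families of integers, and let D := Σ_{j=1}^{N^v} n⁰_j + Σ_{i=1}^{N^b} (n⁻_i + n⁺_i). Suppose D < 0. Then equality Σ_{j=1}^{N^v} (n⁰_j)² + Σ_{i=1}^{N^b} [ (n⁻_i + α/π)² + (n⁺_i − α/π)² ] = |D| · C_α holds if and only if n⁰_j = 0 for all j, N^b = −D, and n⁺_i = 0 and n⁻_i = −1 for every i = 1, …, N^b. -/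
/-!
Write `t = α/π` and `C = t² + (1 - t)²`. Since `D < 0`, the equality reads `E + D·C = 0`, where `E`
is the left-hand side, and expanding `D` as a sum of degrees gives
`E + D·C = Σ n⁰(n⁰ + C) + Σ [(n⁻ + 1)(n⁻ + 1 + 2t² - 1) + n⁺(n⁺ + 2t² - 4t + 1)]`.
For `0 < t < 1` the three shifts `C`, `2t² - 1`, `2t² - 4t + 1` lie in `(-1, 1)`, and `k(k + e) > 0`
for every nonzero integer `k` once `|e| < 1`. So every summand is nonnegative and the sum vanishes
exactly when `n⁰ = 0`, `n⁻ = -1` and `n⁺ = 0` throughout, which in turn forces `D = -N^b`.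
-/

open Finset

lemma intCast_mul_add_pos {k : ℤ} (hk : k ≠ 0) {e : ℝ} (he : |e| < 1) :
    0 < (k : ℝ) * (k + e) := by
  obtain ⟨he₁, he₂⟩ := abs_lt.mp he
  rcases lt_or_gt_of_ne hk with hneg | hpos
  · have : (k : ℝ) ≤ -1 := by exact_mod_cast Int.le_sub_one_of_lt hneg
    nlinarith
  · have : (1 : ℝ) ≤ k := by exact_mod_cast hpos
    nlinarith

lemma intCast_mul_add_nonneg (k : ℤ) {e : ℝ} (he : |e| < 1) : 0 ≤ (k : ℝ) * (k + e) := by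
  rcases eq_or_ne k 0 with rfl | hk
  · simp
  · exact (intCast_mul_add_pos hk he).le

lemma intCast_mul_add_eq_zero_iff {k : ℤ} {e : ℝ} (he : |e| < 1) :
    (k : ℝ) * (k + e) = 0 ↔ k = 0 := by
  refine ⟨fun h => by_contra fun hk => (intCast_mul_add_pos hk he).ne' h, ?_⟩
  rintro rfl
  simp

lemma abs_sq_add_one_sub_sq_lt_one {t : ℝ} (ht₀ : 0 < t) (ht₁ : t < 1) :
    |t ^ 2 + (1 - t) ^ 2| < 1 :=
  abs_lt.mpr ⟨by nlinarith, by nlinarith⟩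

lemma abs_two_mul_sq_sub_one_lt_one {t : ℝ} (ht₀ : 0 < t) (ht₁ : t < 1) :
    |2 * t ^ 2 - 1| < 1 :=
  abs_lt.mpr ⟨by nlinarith, by nlinarith⟩

lemma abs_two_mul_sq_sub_four_mul_add_one_lt_one {t : ℝ} (ht₀ : 0 < t) (ht₁ : t < 1) :
    |2 * t ^ 2 - 4 * t + 1| < 1 :=
  abs_lt.mpr ⟨by nlinarith, by nlinarith⟩

/-- The excess of a boojum pair of degrees `(a, b)` over its share `-(a + b)·C` of the bound
`|D|·C`. -/
def boojumExcess (t : ℝ) (a b : ℤ) : ℝ :=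
  ((a + 1 : ℤ) : ℝ) * ((a + 1 : ℤ) + (2 * t ^ 2 - 1)) + (b : ℝ) * (b + (2 * t ^ 2 - 4 * t + 1))

lemma boojumExcess_eq (t : ℝ) (a b : ℤ) :
    boojumExcess t a b =
      ((a : ℝ) + t) ^ 2 + ((b : ℝ) - t) ^ 2 + ((a : ℝ) + b) * (t ^ 2 + (1 - t) ^ 2) := by
  unfold boojumExcess
  push_cast
  ring

lemma boojumExcess_nonneg {t : ℝ} (ht₀ : 0 < t) (ht₁ : t < 1) (a b : ℤ) :
    0 ≤ boojumExcess t a b :=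
  add_nonneg (intCast_mul_add_nonneg _ (abs_two_mul_sq_sub_one_lt_one ht₀ ht₁))
    (intCast_mul_add_nonneg _ (abs_two_mul_sq_sub_four_mul_add_one_lt_one ht₀ ht₁))

lemma boojumExcess_eq_zero_iff {t : ℝ} (ht₀ : 0 < t) (ht₁ : t < 1) {a b : ℤ} :
    boojumExcess t a b = 0 ↔ b = 0 ∧ a = -1 := by
  have hm := abs_two_mul_sq_sub_one_lt_one ht₀ ht₁
  have hp := abs_two_mul_sq_sub_four_mul_add_one_lt_one ht₀ ht₁
  rw [boojumExcess, add_eq_zero_iff_of_nonneg (intCast_mul_add_nonneg _ hm)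
    (intCast_mul_add_nonneg _ hp), intCast_mul_add_eq_zero_iff hm, intCast_mul_add_eq_zero_iff hp,
    add_eq_zero_iff_eq_neg, and_comm]

theorem energy_add_degree_mul_eq_zero_iff {ι κ : Type*} [Fintype ι] [Fintype κ] {t : ℝ}
    (ht₀ : 0 < t) (ht₁ : t < 1) (n0 : ι → ℤ) (nm np : κ → ℤ) :
    (∑ j, (n0 j : ℝ) ^ 2) + ∑ i, (((nm i : ℝ) + t) ^ 2 + ((np i : ℝ) - t) ^ 2) +
        ((∑ j, (n0 j : ℝ)) + ∑ i, ((nm i : ℝ) + np i)) * (t ^ 2 + (1 - t) ^ 2) = 0 ↔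
      (∀ j, n0 j = 0) ∧ ∀ i, np i = 0 ∧ nm i = -1 := by
  set C := t ^ 2 + (1 - t) ^ 2
  have hC : |C| < 1 := abs_sq_add_one_sub_sq_lt_one ht₀ ht₁
  have hpair (a b : ℤ) :
      boojumExcess t a b = ((a : ℝ) + t) ^ 2 + ((b : ℝ) - t) ^ 2 + ((a : ℝ) + b) * C :=
    boojumExcess_eq t a b
  clear_value C
  have hsplit : (∑ j, (n0 j : ℝ) ^ 2) + ∑ i, (((nm i : ℝ) + t) ^ 2 + ((np i : ℝ) - t) ^ 2) +
      ((∑ j, (n0 j : ℝ)) + ∑ i, ((nm i : ℝ) + np i)) * C =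
      (∑ j, (n0 j : ℝ) * (n0 j + C)) + ∑ i, boojumExcess t (nm i) (np i) := by
    simp only [hpair, mul_add, add_mul, sum_add_distrib, sum_mul, ← sq]
    ring
  have hvortex : ∀ j ∈ univ, 0 ≤ (n0 j : ℝ) * (n0 j + C) :=
    fun j _ => intCast_mul_add_nonneg _ hC
  have hboojum : ∀ i ∈ univ, 0 ≤ boojumExcess t (nm i) (np i) :=
    fun i _ => boojumExcess_nonneg ht₀ ht₁ _ _
  simp only [hsplit, add_eq_zero_iff_of_nonneg (sum_nonneg hvortex) (sum_nonneg hboojum),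
    sum_eq_zero_iff_of_nonneg hvortex, sum_eq_zero_iff_of_nonneg hboojum, mem_univ, true_imp_iff,
    intCast_mul_add_eq_zero_iff hC, boojumExcess_eq_zero_iff ht₀ ht₁]

open Finset in
/-- The degree lemma (equality case, `D < 0`): equality
`Σ (n⁰)² + Σ [(n⁻ + α/π)² + (n⁺ − α/π)²] = |D|·C_α` holds iff all boundary-vortex
degrees vanish, `N^b = −D`, and every pair is `(n⁺, n⁻) = (0, −1)`. -/
theorem degree_lemma_equality_neg (α : ℝ) (hα : α ∈ Set.Ioo 0 (Real.pi / 2))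
    (Nv Nb : ℕ) (n0 : Fin Nv → ℤ) (nm np : Fin Nb → ℤ) (D : ℤ)
    (hD : D = (∑ j, n0 j) + ∑ i, (nm i + np i)) (hDneg : D < 0) :
    ((∑ j, ((n0 j : ℝ)) ^ 2) +
        ∑ i, (((nm i : ℝ) + α / Real.pi) ^ 2 + ((np i : ℝ) - α / Real.pi) ^ 2) =
      |(D : ℝ)| * ((α / Real.pi) ^ 2 + (1 - α / Real.pi) ^ 2)) ↔
      ((∀ j, n0 j = 0) ∧ (Nb : ℤ) = -D ∧ ∀ i, np i = 0 ∧ nm i = -1) := by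
  obtain ⟨hα₀, hα₁⟩ := hα
  have ht₀ : 0 < α / Real.pi := div_pos hα₀ Real.pi_pos
  have ht₁ : α / Real.pi < 1 := (div_lt_one Real.pi_pos).mpr (by linarith [Real.pi_pos])
  have hDcast : (D : ℝ) = (∑ j, (n0 j : ℝ)) + ∑ i, ((nm i : ℝ) + np i) := by
    rw [hD]
    push_cast
    rfl
  rw [abs_of_neg (Int.cast_lt_zero.mpr hDneg), ← sub_eq_zero, neg_mul, sub_neg_eq_add, hDcast,
    energy_add_degree_mul_eq_zero_iff ht₀ ht₁]
  constructor
  · rintro ⟨hvortex, hboojum⟩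
    refine ⟨hvortex, ?_, hboojum⟩
    simp [hD, hvortex, hboojum]
  · rintro ⟨hvortex, -, hboojum⟩
    exact ⟨hvortex, hboojum⟩
end

section
/- Let α ∈ (0, π/2) and set C_α := (α/π)² + (1 − α/π)². Let N be a natural number and let n : {1, …, N} → ℤ and τ : {1, …, N} → {−1, 0, 1} be families with Σ_{ℓ=1}^{N} τ_ℓ = 0, and let D := Σ_{ℓ=1}^{N} n_ℓ. Then Σ_{ℓ=1}^{N} (n_ℓ − τ_ℓ·(α/π))² ≥ |D| · C_α. -/
/-!
Write `t = α/π`. For an integer `m` and `τ ∈ {-1, 0, 1}` one has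
`(m - τ t)² ≥ C m - τ t²`: in each of the three cases the difference factors as `k (k - c)`
with `k ∈ ℤ` and `|c| ≤ 1`, which is nonnegative. Summing over the defects, the terms `τ t²`
cancel because `Σ τ = 0`, so the energy is at least `C D`; applying this to `(-n, -τ)` gives
`-C D` as well, hence `C |D|`.
-/

open Finset

lemma intCast_mul_sub_nonneg (k : ℤ) {c : ℝ} (hc : |c| ≤ 1) : 0 ≤ (k : ℝ) * (k - c) := by
  obtain ⟨hc₁, hc₂⟩ := abs_le.mp hc
  rcases lt_trichotomy k 0 with hk | rfl | hk
  · have : (k : ℝ) ≤ -1 := by exact_mod_cast Int.le_sub_one_of_lt hk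
    nlinarith
  · simp
  · have : (1 : ℝ) ≤ k := by exact_mod_cast hk
    nlinarith

/-- The constant `C_α` of the degree lemma, as a function of `t = α/π`. -/
def boojumConst (t : ℝ) : ℝ := t ^ 2 + (1 - t) ^ 2

lemma boojumConst_mul_sub_le_sq {t : ℝ} (ht : t ∈ Set.Icc 0 1) (m τ : ℤ)
    (hτ : τ = -1 ∨ τ = 0 ∨ τ = 1) :
    boojumConst t * m - τ * t ^ 2 ≤ ((m : ℝ) - τ * t) ^ 2 := by
  obtain ⟨ht₀, ht₁⟩ := ht
  rw [← sub_nonneg]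
  rcases hτ with rfl | rfl | rfl
  · have hc : |2 * (t - 1) ^ 2 - 1| ≤ 1 := abs_le.mpr ⟨by nlinarith, by nlinarith⟩
    calc (0 : ℝ) ≤ m * (m - (2 * (t - 1) ^ 2 - 1)) := intCast_mul_sub_nonneg m hc
      _ = _ := by unfold boojumConst; push_cast; ring
  · have hc : |boojumConst t| ≤ 1 :=
      abs_le.mpr ⟨by unfold boojumConst; nlinarith, by unfold boojumConst; nlinarith⟩
    calc (0 : ℝ) ≤ m * (m - boojumConst t) := intCast_mul_sub_nonneg m hc
      _ = _ := by unfold boojumConst; push_cast; ring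
  · have hc : |2 * t ^ 2 - 1| ≤ 1 := abs_le.mpr ⟨by nlinarith, by nlinarith⟩
    calc (0 : ℝ) ≤ ((m - 1 : ℤ) : ℝ) * ((m - 1 : ℤ) - (2 * t ^ 2 - 1)) :=
          intCast_mul_sub_nonneg (m - 1) hc
      _ = _ := by unfold boojumConst; push_cast; ring

section Sum

variable {ι : Type*} [Fintype ι] {t : ℝ} (ht : t ∈ Set.Icc 0 1) (n τ : ι → ℤ)
  (hτ : ∀ i, τ i = -1 ∨ τ i = 0 ∨ τ i = 1) (hsum : ∑ i, τ i = 0)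
include ht hτ hsum

lemma boojumConst_mul_sum_le :
    boojumConst t * ∑ i, (n i : ℝ) ≤ ∑ i, ((n i : ℝ) - τ i * t) ^ 2 := by
  have hτℝ : ∑ i, (τ i : ℝ) = 0 := by exact_mod_cast hsum
  calc boojumConst t * ∑ i, (n i : ℝ)
      = ∑ i, (boojumConst t * n i - τ i * t ^ 2) := by
        rw [sum_sub_distrib, ← mul_sum, ← sum_mul, hτℝ, zero_mul, sub_zero]
    _ ≤ ∑ i, ((n i : ℝ) - τ i * t) ^ 2 :=
        sum_le_sum fun i _ => boojumConst_mul_sub_le_sq ht (n i) (τ i) (hτ i)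

lemma abs_sum_mul_boojumConst_le :
    |∑ i, (n i : ℝ)| * boojumConst t ≤ ∑ i, ((n i : ℝ) - τ i * t) ^ 2 := by
  have hpos := boojumConst_mul_sum_le ht n τ hτ hsum
  have hneg := boojumConst_mul_sum_le ht (-n) (-τ)
    (fun i => by rcases hτ i with h | h | h <;> simp [h]) (by simp [hsum])
  simp only [Pi.neg_apply, Int.cast_neg, sum_neg_distrib, neg_mul, sub_neg_eq_add] at hneg
  have hsq : ∀ i, (-(n i : ℝ) + τ i * t) ^ 2 = ((n i : ℝ) - τ i * t) ^ 2 := fun i => by ring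
  simp only [hsq] at hneg
  rcases abs_cases (∑ i, (n i : ℝ)) with ⟨h, _⟩ | ⟨h, _⟩ <;> rw [h] <;> linarith

end Sum

/-- Concise form of the degree lemma: defects carry degrees `n_ℓ ∈ ℤ` and boojum
numbers `τ_ℓ ∈ {−1, 0, 1}` with `Σ τ_ℓ = 0`; then
`Σ (n_ℓ − τ_ℓ·α/π)² ≥ |D|·C_α` where `D = Σ n_ℓ`. -/
theorem degree_lemma_concise (α : ℝ) (hα : α ∈ Set.Ioo 0 (Real.pi / 2))
    (N : ℕ) (n : Fin N → ℤ) (τ : Fin N → ℤ)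
    (hτ : ∀ ℓ, τ ℓ = -1 ∨ τ ℓ = 0 ∨ τ ℓ = 1) (hsum : (∑ ℓ, τ ℓ) = 0)
    (D : ℤ) (hD : D = ∑ ℓ, n ℓ) :
    ∑ ℓ, ((n ℓ : ℝ) - (τ ℓ : ℝ) * (α / Real.pi)) ^ 2 ≥
      |(D : ℝ)| * ((α / Real.pi) ^ 2 + (1 - α / Real.pi) ^ 2) := by
  have ht : α / Real.pi ∈ Set.Icc 0 1 := by
    obtain ⟨hα₀, hα₁⟩ := hα
    constructor
    · positivity
    · rw [div_le_one Real.pi_pos]; linarith [Real.pi_pos]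
  have hDℝ : (D : ℝ) = ∑ ℓ, (n ℓ : ℝ) := by rw [hD]; push_cast; rfl
  rw [hDℝ]
  exact abs_sum_mul_boojumConst_le ht n τ hτ hsum
end
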